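/- arXiv:2112.12909 — 2 statements merged into one kernel-verified Lean document; each statement's English description precedes it below -/
import Mathlib

section
/- Assume model (1.1) and that all K₂ column clusters have equal size q/K₂ (so K₂ divides q and Bᵀ B = (q/K₂) I_{K₂}). Then Σ_{p,W_I} = (1/K₂) A E(Z Zᵀ) Aᵀ + (1/q) E(Γ Γᵀ) and Σ_{p,W_O} = (1/K₂) A E(Z Zᵀ) Aᵀ + (K₂/q) · { (1/q) E(Γ Γᵀ) }; that is, the two weighted covariance matrices have the same signal term while the noise term in Σ_{p,W_O} is reduced by the factor K₂/q relative to Σ_{p,W_I}. -/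
open MeasureTheory ProbabilityTheory Matrix BigOperators Finset
open scoped Classical

noncomputable section

instance {m n : Type*} : MeasurableSpace (Matrix m n ℝ) :=
  inferInstanceAs (MeasurableSpace (m → n → ℝ))

/-- Entrywise expectation of a random matrix. -/
def matExp {Ω : Type*} [MeasurableSpace Ω] (μ : Measure Ω) {m n : ℕ}
    (X : Ω → Matrix (Fin m) (Fin n) ℝ) : Matrix (Fin m) (Fin n) ℝ :=
  Matrix.of fun i j => ∫ ω, X ω i j ∂μ

/-- A membership matrix: binary, every row has exactly one 1, every column is nonzero. -/
def IsMembership {p K : ℕ} (A : Matrix (Fin p) (Fin K) ℝ) : Prop :=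
  (∀ i k, A i k = 0 ∨ A i k = 1) ∧ (∀ i, ∃! k, A i k = 1) ∧ (∀ k, ∃ i, A i k = 1)

/-- `a` and `b` belong to the same cluster encoded by the membership matrix `A`. -/
def SameCluster {p K : ℕ} (A : Matrix (Fin p) (Fin K) ℝ) (a b : Fin p) : Prop :=
  ∃ k, A a k = 1 ∧ A b k = 1

/-!
Expand `X W Xᵀ` with `X = A Z Bᵀ + Γ`. The cross terms have mean zero because `Γ` is centred
and independent of `Z`; the signal term is `A E(Z (Bᵀ W B) Zᵀ) Aᵀ`; and since distinct entries
of `Γ` are uncorrelated, the noise term `E(Γ W Γᵀ)` only sees the diagonal of `W`.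
With balanced clusters `Bᵀ B = (q/K₂) I`, both weights satisfy `Bᵀ W B = I/K₂`, and their
diagonals are constant: `1/q` for `W_I`, and `K₂/q²` for `W_O` because `B Bᵀ` has unit diagonal.
-/

lemma Matrix.mul_mul_transpose_apply {l m n o : Type*} [Fintype n] [Fintype o]
    {R : Type*} [CommSemiring R] (A : Matrix l n R) (M : Matrix n o R) (B : Matrix m o R)
    (i : l) (i' : m) :
    (A * M * Bᵀ) i i' = ∑ k, ∑ k', M k k' * (A i k * B i' k') := by
  simp only [mul_apply, transpose_apply, Finset.sum_mul]
  rw [Finset.sum_comm]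
  exact Finset.sum_congr rfl fun _ _ => Finset.sum_congr rfl fun _ _ => by ring

lemma Matrix.inv_smul_one {n α : Type*} [Fintype n] [DecidableEq n] [Field α] {c : α}
    (hc : c ≠ 0) : (c • (1 : Matrix n n α))⁻¹ = c⁻¹ • 1 :=
  inv_eq_left_inv <| by rw [smul_mul_smul_comm, inv_mul_cancel₀ hc, Matrix.mul_one, one_smul]

namespace IsMembership

variable {p K : ℕ} {A : Matrix (Fin p) (Fin K) ℝ}

lemma exists_eq_ite (hA : IsMembership A) :
    ∃ σ : Fin p → Fin K, A = of fun i k => if σ i = k then 1 else 0 := by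
  choose σ hσ hσu using hA.2.1
  refine ⟨σ, ext fun i k => ?_⟩
  rcases hA.1 i k with h0 | h1
  · have : σ i ≠ k := fun h => by simp [← h, hσ i] at h0
    simp [h0, this]
  · simp [h1, (hσu i k h1).symm]

lemma mul_transpose_self_apply_self (hA : IsMembership A) (i : Fin p) : (A * Aᵀ) i i = 1 := by
  obtain ⟨σ, rfl⟩ := hA.exists_eq_ite
  simp [mul_apply]

lemma transpose_mul_self_of_card_eq (hA : IsMembership A) {c : ℕ}
    (hsize : ∀ k, (univ.filter fun i => A i k = 1).card = c) :
    Aᵀ * A = (c : ℝ) • 1 := by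
  obtain ⟨σ, rfl⟩ := hA.exists_eq_ite
  ext k k'
  simp only [of_apply, ite_eq_left_iff, zero_ne_one, imp_false, not_not] at hsize
  by_cases hk : k = k'
  · subst hk
    simp [mul_apply, ← Finset.sum_filter, Finset.filter_filter, hsize]
  · simp +contextual [mul_apply, one_apply, hk, Ne.symm hk]

end IsMembership

section RandomMatrices

variable {Ω : Type*} [MeasurableSpace Ω] {μ : Measure Ω} {l m n o : ℕ}

lemma ProbabilityTheory.IndepFun.integral_mul_eq_zero {f g : Ω → ℝ} (hfg : IndepFun f g μ)
    (hf : AEStronglyMeasurable f μ) (hg : AEStronglyMeasurable g μ) (hg0 : ∫ ω, g ω ∂μ = 0) :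
    ∫ ω, f ω * g ω ∂μ = 0 := by
  rw [hfg.integral_fun_mul_eq_mul_integral hf hg, hg0, mul_zero]

lemma integral_mul_apply_eq_zero_of_indepFun {Y : Ω → Matrix (Fin l) (Fin n) ℝ}
    {Y' : Ω → Matrix (Fin m) (Fin o) ℝ} (h : IndepFun Y Y' μ) (hY : Measurable Y)
    (hY' : Measurable Y') (h0 : ∀ a b, ∫ ω, Y' ω a b ∂μ = 0) (i k a b) :
    ∫ ω, Y ω i k * Y' ω a b ∂μ = 0 := by
  have hik_ab : IndepFun (fun ω => Y ω i k) (fun ω => Y' ω a b) μ :=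
    h.comp (φ := fun M : Matrix (Fin l) (Fin n) ℝ => M i k)
      (ψ := fun M : Matrix (Fin m) (Fin o) ℝ => M a b) (by fun_prop) (by fun_prop)
  exact hik_ab.integral_mul_eq_zero (by fun_prop) (by fun_prop) (h0 a b)

lemma matExp_add {X Y : Ω → Matrix (Fin m) (Fin n) ℝ}
    (hX : ∀ i j, Integrable (fun ω => X ω i j) μ) (hY : ∀ i j, Integrable (fun ω => Y ω i j) μ) :
    matExp μ (fun ω => X ω + Y ω) = matExp μ X + matExp μ Y := by
  ext i j
  exact integral_add (hX i j) (hY i j)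

lemma matExp_smul (c : ℝ) (X : Ω → Matrix (Fin m) (Fin n) ℝ) :
    matExp μ (fun ω => c • X ω) = c • matExp μ X := by
  ext i j
  exact integral_const_mul c _

lemma integrable_const_mul_mul_const_apply {Y : Ω → Matrix (Fin m) (Fin n) ℝ}
    (M : Matrix (Fin l) (Fin m) ℝ) (N : Matrix (Fin n) (Fin o) ℝ)
    (hY : ∀ i j, Integrable (fun ω => Y ω i j) μ) (i : Fin l) (j : Fin o) :
    Integrable (fun ω => (M * Y ω * N) i j) μ := by
  simp only [mul_apply, Finset.sum_mul]
  exact integrable_finsetSum _ fun k _ => integrable_finsetSum _ fun k' _ =>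
    ((hY k' k).const_mul (M i k')).mul_const (N k j)

lemma matExp_const_mul_mul_const {Y : Ω → Matrix (Fin m) (Fin n) ℝ}
    (M : Matrix (Fin l) (Fin m) ℝ) (N : Matrix (Fin n) (Fin o) ℝ)
    (hY : ∀ i j, Integrable (fun ω => Y ω i j) μ) :
    matExp μ (fun ω => M * Y ω * N) = M * matExp μ Y * N := by
  ext i j
  simp only [matExp, of_apply, mul_apply, Finset.sum_mul]
  rw [integral_finsetSum _ fun k _ => integrable_finsetSum _ fun k' _ =>
    ((hY k' k).const_mul (M i k')).mul_const (N k j)]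
  refine Finset.sum_congr rfl fun k _ => ?_
  rw [integral_finsetSum _ fun k' _ => ((hY k' k).const_mul (M i k')).mul_const (N k j)]
  simp only [integral_mul_const, integral_const_mul]

section SecondMoments

variable {Y : Ω → Matrix (Fin l) (Fin n) ℝ} {Y' : Ω → Matrix (Fin m) (Fin o) ℝ}
  (M : Matrix (Fin n) (Fin o) ℝ)

lemma integrable_mul_mul_transpose_apply
    (hYY' : ∀ i k i' k', Integrable (fun ω => Y ω i k * Y' ω i' k') μ) (i : Fin l) (i' : Fin m) :
    Integrable (fun ω => (Y ω * M * (Y' ω)ᵀ) i i') μ := by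
  simp only [mul_mul_transpose_apply]
  exact integrable_finsetSum _ fun k _ => integrable_finsetSum _ fun k' _ =>
    (hYY' i k i' k').const_mul _

lemma matExp_mul_mul_transpose_apply
    (hYY' : ∀ i k i' k', Integrable (fun ω => Y ω i k * Y' ω i' k') μ) (i : Fin l) (i' : Fin m) :
    matExp μ (fun ω => Y ω * M * (Y' ω)ᵀ) i i'
      = ∑ k, ∑ k', M k k' * ∫ ω, Y ω i k * Y' ω i' k' ∂μ := by
  simp only [matExp, of_apply, mul_mul_transpose_apply]
  rw [integral_finsetSum _ fun k _ => integrable_finsetSum _ fun k' _ =>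
    (hYY' i k i' k').const_mul (M k k')]
  refine Finset.sum_congr rfl fun k _ => ?_
  rw [integral_finsetSum _ fun k' _ => (hYY' i k i' k').const_mul (M k k')]
  simp only [integral_const_mul]

lemma matExp_mul_mul_transpose_eq_zero
    (hYY' : ∀ i k i' k', Integrable (fun ω => Y ω i k * Y' ω i' k') μ)
    (h0 : ∀ i k i' k', ∫ ω, Y ω i k * Y' ω i' k' ∂μ = 0) :
    matExp μ (fun ω => Y ω * M * (Y' ω)ᵀ) = 0 := by
  ext i i'
  simp [matExp_mul_mul_transpose_apply M hYY', h0]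

end SecondMoments

lemma matExp_mul_mul_transpose_of_uncorrelated {Γ : Ω → Matrix (Fin m) (Fin n) ℝ}
    {W : Matrix (Fin n) (Fin n) ℝ} {w : ℝ} (hW : ∀ b, W b b = w)
    (hΓint : ∀ a b a' b', Integrable (fun ω => Γ ω a b * Γ ω a' b') μ)
    (hΓ0 : ∀ a b a' b', b ≠ b' → ∫ ω, Γ ω a b * Γ ω a' b' ∂μ = 0) :
    matExp μ (fun ω => Γ ω * W * (Γ ω)ᵀ) = w • matExp μ (fun ω => Γ ω * (Γ ω)ᵀ) := by
  ext a a'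
  have hΓΓ : ∀ ω, Γ ω * (Γ ω)ᵀ = Γ ω * (1 : Matrix (Fin n) (Fin n) ℝ) * (Γ ω)ᵀ := fun ω => by
    rw [Matrix.mul_one]
  simp only [hΓΓ, Matrix.smul_apply, smul_eq_mul, matExp_mul_mul_transpose_apply _ hΓint,
    Finset.mul_sum]
  refine Finset.sum_congr rfl fun b _ => ?_
  have off_diag : ∀ b' ∈ univ, b' ≠ b → ∫ ω, Γ ω a b * Γ ω a' b' ∂μ = 0 :=
    fun b' _ hb' => hΓ0 a b a' b' hb'.symm
  rw [Finset.sum_eq_single b (by simp +contextual [off_diag]) (by simp),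
    Finset.sum_eq_single b (by simp +contextual [off_diag]) (by simp), hW, one_apply_eq, one_mul]

section Model

variable {p q K₁ K₂ : ℕ} (A : Matrix (Fin p) (Fin K₁) ℝ) (B : Matrix (Fin q) (Fin K₂) ℝ)
  {Z : Ω → Matrix (Fin K₁) (Fin K₂) ℝ} {Γ : Ω → Matrix (Fin p) (Fin q) ℝ}

lemma matExp_weighted_outer_signal_add_noise (W : Matrix (Fin q) (Fin q) ℝ)
    (hZint : ∀ j k j' k', Integrable (fun ω => Z ω j k * Z ω j' k') μ)
    (hΓint : ∀ a b a' b', Integrable (fun ω => Γ ω a b * Γ ω a' b') μ)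
    (hZΓint : ∀ j k a b, Integrable (fun ω => Z ω j k * Γ ω a b) μ)
    (hZΓ : ∀ j k a b, ∫ ω, Z ω j k * Γ ω a b ∂μ = 0) :
    matExp μ (fun ω => (A * Z ω * Bᵀ + Γ ω) * W * (A * Z ω * Bᵀ + Γ ω)ᵀ)
      = A * matExp μ (fun ω => Z ω * (Bᵀ * W * B) * (Z ω)ᵀ) * Aᵀ
        + matExp μ (fun ω => Γ ω * W * (Γ ω)ᵀ) := by
  have hΓZint : ∀ a b j k, Integrable (fun ω => Γ ω a b * Z ω j k) μ := fun a b j k => by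
    simpa only [mul_comm] using hZΓint j k a b
  have hΓZ : ∀ a b j k, ∫ ω, Γ ω a b * Z ω j k ∂μ = 0 := fun a b j k => by
    simpa only [mul_comm] using hZΓ j k a b
  have expand : ∀ ω, (A * Z ω * Bᵀ + Γ ω) * W * (A * Z ω * Bᵀ + Γ ω)ᵀ
      = (A * (Z ω * (Bᵀ * W * B) * (Z ω)ᵀ) * Aᵀ
          + A * (Z ω * (Bᵀ * W) * (Γ ω)ᵀ) * (1 : Matrix (Fin p) (Fin p) ℝ))
        + ((1 : Matrix (Fin p) (Fin p) ℝ) * (Γ ω * (W * B) * (Z ω)ᵀ) * Aᵀ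
          + Γ ω * W * (Γ ω)ᵀ) := fun ω => by
    simp only [Matrix.add_mul, Matrix.mul_add, transpose_add, transpose_mul, transpose_transpose,
      Matrix.mul_assoc, Matrix.mul_one, Matrix.one_mul]
    abel
  have hsig := integrable_mul_mul_transpose_apply (Bᵀ * W * B) hZint
  have hcross := integrable_mul_mul_transpose_apply (Bᵀ * W) hZΓint
  have hcross' := integrable_mul_mul_transpose_apply (W * B) hΓZint
  have hnoise := integrable_mul_mul_transpose_apply W hΓint
  have hsig₁ := integrable_const_mul_mul_const_apply A Aᵀ hsig
  have hcross₁ := integrable_const_mul_mul_const_apply A (1 : Matrix (Fin p) (Fin p) ℝ) hcross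
  have hcross₁' := integrable_const_mul_mul_const_apply (1 : Matrix (Fin p) (Fin p) ℝ) Aᵀ hcross'
  simp only [expand]
  rw [matExp_add, matExp_add hsig₁ hcross₁, matExp_add hcross₁' hnoise,
    matExp_const_mul_mul_const _ _ hsig, matExp_const_mul_mul_const _ _ hcross,
    matExp_const_mul_mul_const _ _ hcross', matExp_mul_mul_transpose_eq_zero _ hZΓint hZΓ,
    matExp_mul_mul_transpose_eq_zero _ hΓZint hΓZ]
  · simp only [Matrix.mul_zero, Matrix.zero_mul, add_zero, zero_add]
  · exact fun i j => (hsig₁ i j).add (hcross₁ i j)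
  · exact fun i j => (hcross₁' i j).add (hnoise i j)

lemma matExp_weighted_outer_signal_add_noise_eq_smul {W : Matrix (Fin q) (Fin q) ℝ} {s w : ℝ}
    (hW : Bᵀ * W * B = s • 1) (hWdiag : ∀ b, W b b = w)
    (hZint : ∀ j k j' k', Integrable (fun ω => Z ω j k * Z ω j' k') μ)
    (hΓint : ∀ a b a' b', Integrable (fun ω => Γ ω a b * Γ ω a' b') μ)
    (hZΓint : ∀ j k a b, Integrable (fun ω => Z ω j k * Γ ω a b) μ)
    (hZΓ : ∀ j k a b, ∫ ω, Z ω j k * Γ ω a b ∂μ = 0)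
    (hΓΓ : ∀ a b a' b', b ≠ b' → ∫ ω, Γ ω a b * Γ ω a' b' ∂μ = 0) :
    matExp μ (fun ω => (A * Z ω * Bᵀ + Γ ω) * W * (A * Z ω * Bᵀ + Γ ω)ᵀ)
      = s • (A * matExp μ (fun ω => Z ω * (Z ω)ᵀ) * Aᵀ)
        + w • matExp μ (fun ω => Γ ω * (Γ ω)ᵀ) := by
  rw [matExp_weighted_outer_signal_add_noise A B W hZint hΓint hZΓint hZΓ, hW,
    matExp_mul_mul_transpose_of_uncorrelated hWdiag hΓint hΓΓ]
  simp only [Matrix.mul_smul, Matrix.mul_one, Matrix.smul_mul, matExp_smul]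

end Model

end RandomMatrices

theorem optimal_weight_noise_reduction_general
    {Ω : Type} [MeasurableSpace Ω] (μ : Measure Ω)
    {p q K₁ K₂ : ℕ} (hq : 0 < q) (hK₂ : 0 < K₂) (hdvd : K₂ ∣ q)
    (A : Matrix (Fin p) (Fin K₁) ℝ) (B : Matrix (Fin q) (Fin K₂) ℝ)
    (Z : Ω → Matrix (Fin K₁) (Fin K₂) ℝ) (Γ X : Ω → Matrix (Fin p) (Fin q) ℝ)
    (hB : IsMembership B)
    (hsize : ∀ t : Fin K₂, (Finset.univ.filter fun j => B j t = 1).card = q / K₂)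
    (hmodel : ∀ ω, X ω = A * Z ω * Bᵀ + Γ ω)
    (hZmeas : Measurable Z) (hΓmeas : Measurable Γ)
    (hΓmean : ∀ a b, ∫ ω, Γ ω a b ∂μ = 0)
    (hZint : ∀ j k j' k', Integrable (fun ω => Z ω j k * Z ω j' k') μ)
    (hΓint : ∀ a b a' b', Integrable (fun ω => Γ ω a b * Γ ω a' b') μ)
    (hZΓint : ∀ j k a b, Integrable (fun ω => Z ω j k * Γ ω a b) μ)
    (hΓindep : iIndepFun
      (fun (ij : Fin p × Fin q) ω => Γ ω ij.1 ij.2) μ)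
    (hindep : IndepFun Z Γ μ) :
    matExp μ (fun ω => X ω * ((1/(q:ℝ)) • (1 : Matrix (Fin q) (Fin q) ℝ)) * (X ω)ᵀ)
      = (1/(K₂:ℝ)) • (A * matExp μ (fun ω => Z ω * (Z ω)ᵀ) * Aᵀ)
        + (1/(q:ℝ)) • matExp μ (fun ω => Γ ω * (Γ ω)ᵀ) ∧
    matExp μ (fun ω =>
        X ω * ((1/(K₂:ℝ)) • (B * ((Bᵀ * B)^2)⁻¹ * Bᵀ)) * (X ω)ᵀ)
      = (1/(K₂:ℝ)) • (A * matExp μ (fun ω => Z ω * (Z ω)ᵀ) * Aᵀ)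
        + ((K₂:ℝ)/(q:ℝ)) • ((1/(q:ℝ)) • matExp μ (fun ω => Γ ω * (Γ ω)ᵀ)) := by
  have hZΓ := integral_mul_apply_eq_zero_of_indepFun hindep hZmeas hΓmeas hΓmean
  have hΓΓ : ∀ a b a' b', b ≠ b' → ∫ ω, Γ ω a b * Γ ω a' b' ∂μ = 0 := fun a b a' b' hb =>
    (hΓindep.indepFun (i := (a, b)) (j := (a', b')) (by simp [hb])).integral_mul_eq_zero
      (by fun_prop) (by fun_prop) (hΓmean a' b')
  set c : ℝ := ((q / K₂ : ℕ) : ℝ)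
  have hc : c = q / K₂ := Nat.cast_div hdvd (by exact_mod_cast hK₂.ne')
  have hc0 : c ≠ 0 := by rw [hc]; positivity
  have hBtB : Bᵀ * B = c • 1 := hB.transpose_mul_self_of_card_eq hsize
  have hW_O : (1 / (K₂ : ℝ)) • (B * ((Bᵀ * B) ^ 2)⁻¹ * Bᵀ) = (1 / K₂ * (c ^ 2)⁻¹) • (B * Bᵀ) := by
    rw [hBtB, smul_pow, one_pow, Matrix.inv_smul_one (pow_ne_zero 2 hc0), Matrix.mul_smul,
      Matrix.mul_one, Matrix.smul_mul, smul_smul]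
  simp only [hmodel, hW_O, smul_smul]
  constructor
  · refine matExp_weighted_outer_signal_add_noise_eq_smul A B ?_ (fun b => by simp)
      hZint hΓint hZΓint hZΓ hΓΓ
    rw [Matrix.mul_smul, Matrix.mul_one, Matrix.smul_mul, hBtB, smul_smul, hc]
    field_simp
  · refine matExp_weighted_outer_signal_add_noise_eq_smul A B ?_ (fun b => ?_)
      hZint hΓint hZΓint hZΓ hΓΓ
    · simp only [Matrix.mul_smul, Matrix.smul_mul, ← Matrix.mul_assoc, hBtB, Matrix.one_mul,
        smul_smul]
      rw [hc]
      field_simp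
    · rw [Matrix.smul_apply, hB.mul_transpose_self_apply_self, smul_eq_mul, hc]
      field_simp

/-- Under model (1.1) with all `K₂` column clusters of equal size
`q/K₂`, the weighted covariance matrices with `W_I = I_q/q` and
`W_O = B(BᵀB)^{-2}Bᵀ/K₂` share the same signal term `(1/K₂) A E(ZZᵀ) Aᵀ`,
while the noise term of `Σ_{p,W_O}` is `(K₂/q)` times that of `Σ_{p,W_I}`. -/
theorem optimal_weight_noise_reduction
    {Ω : Type} [MeasurableSpace Ω] (μ : Measure Ω) [IsProbabilityMeasure μ]
    {p q K₁ K₂ : ℕ} (hq : 0 < q) (hK₂ : 0 < K₂) (hdvd : K₂ ∣ q)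
    (A : Matrix (Fin p) (Fin K₁) ℝ) (B : Matrix (Fin q) (Fin K₂) ℝ)
    (Z : Ω → Matrix (Fin K₁) (Fin K₂) ℝ) (Γ X : Ω → Matrix (Fin p) (Fin q) ℝ)
    (hA : IsMembership A) (hB : IsMembership B)
    (hsize : ∀ t : Fin K₂, (Finset.univ.filter fun j => B j t = 1).card = q / K₂)
    (hmodel : ∀ ω, X ω = A * Z ω * Bᵀ + Γ ω)
    (hZmeas : Measurable Z) (hΓmeas : Measurable Γ)
    (hZmean : ∀ j k, ∫ ω, Z ω j k ∂μ = 0)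
    (hΓmean : ∀ a b, ∫ ω, Γ ω a b ∂μ = 0)
    (hZint : ∀ j k j' k', Integrable (fun ω => Z ω j k * Z ω j' k') μ)
    (hΓint : ∀ a b a' b', Integrable (fun ω => Γ ω a b * Γ ω a' b') μ)
    (hZΓint : ∀ j k a b, Integrable (fun ω => Z ω j k * Γ ω a b) μ)
    (hΓindep : iIndepFun
      (fun (ij : Fin p × Fin q) ω => Γ ω ij.1 ij.2) μ)
    (hindep : IndepFun Z Γ μ) :
    matExp μ (fun ω => X ω * ((1/(q:ℝ)) • (1 : Matrix (Fin q) (Fin q) ℝ)) * (X ω)ᵀ)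
      = (1/(K₂:ℝ)) • (A * matExp μ (fun ω => Z ω * (Z ω)ᵀ) * Aᵀ)
        + (1/(q:ℝ)) • matExp μ (fun ω => Γ ω * (Γ ω)ᵀ) ∧
    matExp μ (fun ω =>
        X ω * ((1/(K₂:ℝ)) • (B * ((Bᵀ * B)^2)⁻¹ * Bᵀ)) * (X ω)ᵀ)
      = (1/(K₂:ℝ)) • (A * matExp μ (fun ω => Z ω * (Z ω)ᵀ) * Aᵀ)
        + ((K₂:ℝ)/(q:ℝ)) • ((1/(q:ℝ)) • matExp μ (fun ω => Γ ω * (Γ ω)ᵀ)) :=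
  optimal_weight_noise_reduction_general μ hq hK₂ hdvd A B Z Γ X hB hsize hmodel hZmeas hΓmeas
    hΓmean hZint hΓint hZΓint hΓindep hindep
end
end

section
/- Assume X = A Z Bᵀ + Γ where A, B are membership matrices, E(Z) = 0, E(Γ) = 0, Γ is independent of Z (the entries of Γ may be dependent), all second moments are finite, and p ≥ 3. Then for any deterministic positive semidefinite W ∈ ℝ^{q×q}: (i) if a ∼ b, then COD_{Σ_{p,W}}(a,b) ≤ γ(Σ_{p,W}); (ii) if a ≁ b, then COD_{Σ_{p,W}}(a,b) ≥ MCOD*(Σ_{p,W}) − γ(Σ_{p,W}). In particular, if MCOD*(Σ_{p,W}) > 2γ(Σ_{p,W}), then within-cluster pairs and between-cluster pairs are separated by COD_{Σ_{p,W}}. -/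
open MeasureTheory ProbabilityTheory Matrix BigOperators Finset
open scoped Classical

noncomputable section

/-- `COD_Σ(a,b) = max_{c ≠ a,b} |Σ_{ac} − Σ_{bc}|`. -/
def COD {p : ℕ} (S : Matrix (Fin p) (Fin p) ℝ) (a b : Fin p) : ℝ :=
  ⨆ c : Fin p, ⨆ _ : c ≠ a ∧ c ≠ b, |S a c - S b c|

/-- `MCOD(Σ) = min_{a ≁ b} COD_Σ(a,b)`, the minimum over pairs in different clusters. -/
def MCOD {p : ℕ} (r : Fin p → Fin p → Prop) (S : Matrix (Fin p) (Fin p) ℝ) : ℝ :=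
  ⨅ ab : {ab : Fin p × Fin p // ¬ r ab.1 ab.2}, COD S ab.1.1 ab.1.2

/-- Entrywise maximum norm `‖M‖_max = max_{i,j} |M_{ij}|`. -/
def maxNorm {p q : ℕ} (M : Matrix (Fin p) (Fin q) ℝ) : ℝ := ⨆ i, ⨆ j, |M i j|

/-- Frobenius norm. -/
def frob {m n : ℕ} (M : Matrix (Fin m) (Fin n) ℝ) : ℝ := Real.sqrt (∑ i, ∑ j, (M i j)^2)

/-- `γ(Σ_{p,W}) = max_{a,b} max_{c≠a,b} |[E(ΓWΓᵀ)]_{ac} − [E(ΓWΓᵀ)]_{bc}|`. -/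
def gammaNoise {Ω : Type*} [MeasurableSpace Ω] (μ : Measure Ω) {p q : ℕ}
    (Γ : Ω → Matrix (Fin p) (Fin q) ℝ) (W : Matrix (Fin q) (Fin q) ℝ) : ℝ :=
  ⨆ a : Fin p, ⨆ b : Fin p, ⨆ c : Fin p, ⨆ _ : c ≠ a ∧ c ≠ b,
    |matExp μ (fun ω => Γ ω * W * (Γ ω)ᵀ) a c
      - matExp μ (fun ω => Γ ω * W * (Γ ω)ᵀ) b c|

/-! ### Auxiliary lemmas -/

lemma real_iSup_prop (P : Prop) (x : ℝ) : (⨆ _ : P, x) = if P then x else 0 := by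
  by_cases h : P
  · haveI : Nonempty P := ⟨h⟩
    rw [ciSup_const, if_pos h]
  · haveI : IsEmpty P := ⟨h⟩
    rw [Real.iSup_of_isEmpty, if_neg h]

lemma entry_sandwich {m n k l : Type*} [Fintype n] [Fintype k]
    (A : Matrix m n ℝ) (M : Matrix n k ℝ) (B : Matrix l k ℝ) (a : m) (c : l) :
    (A * M * Bᵀ) a c = ∑ i, ∑ j, A a i * B c j * M i j := by
  simp only [Matrix.mul_apply, Matrix.transpose_apply, Finset.sum_mul]
  rw [Finset.sum_comm]
  exact Finset.sum_congr rfl fun i _ => Finset.sum_congr rfl fun j _ => by ring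

lemma integral_quadform {Ω : Type*} [MeasurableSpace Ω] (μ : Measure Ω) {p q : ℕ}
    (U V : Ω → Matrix (Fin p) (Fin q) ℝ) (W : Matrix (Fin q) (Fin q) ℝ)
    (a c : Fin p) (h : ∀ i j, Integrable (fun ω => U ω a i * V ω c j) μ) :
    Integrable (fun ω => (U ω * W * (V ω)ᵀ) a c) μ ∧
    ∫ ω, (U ω * W * (V ω)ᵀ) a c ∂μ
      = ∑ i, ∑ j, W i j * ∫ ω, U ω a i * V ω c j ∂μ := by
  have hfun : (fun ω => (U ω * W * (V ω)ᵀ) a c)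
      = fun ω => ∑ i, ∑ j, W i j * (U ω a i * V ω c j) := by
    funext ω
    simp only [Matrix.mul_apply, Matrix.transpose_apply, Finset.sum_mul]
    rw [Finset.sum_comm]
    exact Finset.sum_congr rfl fun i _ => Finset.sum_congr rfl fun j _ => by ring
  constructor
  · rw [hfun]
    exact integrable_finset_sum _ fun i _ =>
      integrable_finset_sum _ fun j _ => ((h i j).const_mul _)
  · rw [hfun, integral_finset_sum _ fun i _ =>
      integrable_finset_sum _ fun j _ => ((h i j).const_mul (W i j))]
    refine Finset.sum_congr rfl fun i _ => ?_
    rw [integral_finset_sum _ fun j _ => ((h i j).const_mul (W i j))]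
    exact Finset.sum_congr rfl fun j _ => MeasureTheory.integral_const_mul _ _

lemma exists_ne_ne {p : ℕ} (hp : 3 ≤ p) (a b : Fin p) : ∃ c : Fin p, c ≠ a ∧ c ≠ b := by
  by_contra h
  push_neg at h
  have hsub : (Finset.univ : Finset (Fin p)) ⊆ {a, b} := by
    intro c _
    rcases eq_or_ne c a with h1 | h1
    · simp [h1]
    · simp [h c h1]
  have h1 := Finset.card_le_card hsub
  have h2 : ({a, b} : Finset (Fin p)).card ≤ 2 :=
    (Finset.card_insert_le _ _).trans (by simp)
  simp only [Finset.card_univ, Fintype.card_fin] at h1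
  omega

lemma le_COD_aux {p : ℕ} (S : Matrix (Fin p) (Fin p) ℝ) (a b c : Fin p)
    (hca : c ≠ a) (hcb : c ≠ b) : |S a c - S b c| ≤ COD S a b := by
  have h0 : |S a c - S b c| = ⨆ _ : c ≠ a ∧ c ≠ b, |S a c - S b c| := by
    rw [real_iSup_prop, if_pos ⟨hca, hcb⟩]
  have hCOD : COD S a b
      = ⨆ c' : Fin p, ⨆ _ : c' ≠ a ∧ c' ≠ b, |S a c' - S b c'| := rfl
  rw [h0, hCOD]
  exact le_ciSup (f := fun c' : Fin p => ⨆ _ : c' ≠ a ∧ c' ≠ b, |S a c' - S b c'|)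
    (Set.Finite.bddAbove (Set.finite_range _)) c

lemma COD_le_aux {p : ℕ} (S : Matrix (Fin p) (Fin p) ℝ) (a b : Fin p) (M : ℝ)
    (hM : 0 ≤ M) (h : ∀ c, c ≠ a → c ≠ b → |S a c - S b c| ≤ M) : COD S a b ≤ M := by
  rcases Nat.eq_zero_or_pos p with hp0 | hp0
  · subst hp0
    have hCOD : COD S a b
        = ⨆ c' : Fin 0, ⨆ _ : c' ≠ a ∧ c' ≠ b, |S a c' - S b c'| := rfl
    rw [hCOD, Real.iSup_of_isEmpty]
    exact hM
  haveI : Nonempty (Fin p) := ⟨⟨0, hp0⟩⟩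
  refine ciSup_le fun c => ?_
  rw [real_iSup_prop]
  split_ifs with hc
  · exact h c hc.1 hc.2
  · exact hM

lemma COD_nonneg {p : ℕ} (hp : 3 ≤ p) (S : Matrix (Fin p) (Fin p) ℝ) (a b : Fin p) :
    0 ≤ COD S a b := by
  obtain ⟨c, hca, hcb⟩ := exists_ne_ne hp a b
  exact (abs_nonneg _).trans (le_COD_aux S a b c hca hcb)

lemma le_gamma_aux {Ω : Type*} [MeasurableSpace Ω] (μ : Measure Ω) {p q : ℕ}
    (Γ : Ω → Matrix (Fin p) (Fin q) ℝ) (W : Matrix (Fin q) (Fin q) ℝ)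
    (a b c : Fin p) (hca : c ≠ a) (hcb : c ≠ b) :
    |matExp μ (fun ω => Γ ω * W * (Γ ω)ᵀ) a c
      - matExp μ (fun ω => Γ ω * W * (Γ ω)ᵀ) b c| ≤ gammaNoise μ Γ W := by
  set Nm := matExp μ (fun ω => Γ ω * W * (Γ ω)ᵀ) with hNm
  have h0 : |Nm a c - Nm b c| = ⨆ _ : c ≠ a ∧ c ≠ b, |Nm a c - Nm b c| := by
    rw [real_iSup_prop, if_pos ⟨hca, hcb⟩]
  have hγ : gammaNoise μ Γ W
      = ⨆ a' : Fin p, ⨆ b' : Fin p, ⨆ c' : Fin p, ⨆ _ : c' ≠ a' ∧ c' ≠ b',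
          |Nm a' c' - Nm b' c'| := rfl
  rw [hγ]
  calc |Nm a c - Nm b c|
      = ⨆ _ : c ≠ a ∧ c ≠ b, |Nm a c - Nm b c| := h0
    _ ≤ ⨆ c' : Fin p, ⨆ _ : c' ≠ a ∧ c' ≠ b, |Nm a c' - Nm b c'| :=
        le_ciSup (f := fun c' : Fin p => ⨆ _ : c' ≠ a ∧ c' ≠ b, |Nm a c' - Nm b c'|)
          (Set.Finite.bddAbove (Set.finite_range _)) c
    _ ≤ ⨆ b' : Fin p, ⨆ c' : Fin p, ⨆ _ : c' ≠ a ∧ c' ≠ b', |Nm a c' - Nm b' c'| :=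
        le_ciSup (f := fun b' : Fin p =>
            ⨆ c' : Fin p, ⨆ _ : c' ≠ a ∧ c' ≠ b', |Nm a c' - Nm b' c'|)
          (Set.Finite.bddAbove (Set.finite_range _)) b
    _ ≤ ⨆ a' : Fin p, ⨆ b' : Fin p, ⨆ c' : Fin p, ⨆ _ : c' ≠ a' ∧ c' ≠ b',
          |Nm a' c' - Nm b' c'| :=
        le_ciSup (f := fun a' : Fin p => ⨆ b' : Fin p, ⨆ c' : Fin p,
            ⨆ _ : c' ≠ a' ∧ c' ≠ b', |Nm a' c' - Nm b' c'|)
          (Set.Finite.bddAbove (Set.finite_range _)) a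

lemma gamma_nonneg {Ω : Type*} [MeasurableSpace Ω] (μ : Measure Ω) {p q : ℕ}
    (hp : 3 ≤ p) (Γ : Ω → Matrix (Fin p) (Fin q) ℝ) (W : Matrix (Fin q) (Fin q) ℝ) :
    0 ≤ gammaNoise μ Γ W := by
  have ha : 0 < p := by omega
  set a : Fin p := ⟨0, ha⟩
  obtain ⟨c, hca, -⟩ := exists_ne_ne hp a a
  have := le_gamma_aux μ Γ W a a c hca hca
  simpa using this

lemma MCOD_le_aux {p : ℕ} (r : Fin p → Fin p → Prop) (S : Matrix (Fin p) (Fin p) ℝ)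
    (a b : Fin p) (h : ¬ r a b) : MCOD r S ≤ COD S a b :=
  ciInf_le (Set.Finite.bddBelow (Set.finite_range _))
    (⟨(a, b), h⟩ : {ab : Fin p × Fin p // ¬ r ab.1 ab.2})

/-- With possibly dependent noise, within-cluster pairs satisfy
`COD ≤ γ`, between-cluster pairs satisfy `COD ≥ MCOD* − γ`, and if `MCOD* > 2γ` the
within- and between-cluster pairs are separated by the population COD. -/
theorem cod_separation_dependent_noise
    {Ω : Type} [MeasurableSpace Ω] (μ : Measure Ω) [IsProbabilityMeasure μ]
    {p q K₁ K₂ : ℕ} (hp : 3 ≤ p)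
    (A : Matrix (Fin p) (Fin K₁) ℝ) (B : Matrix (Fin q) (Fin K₂) ℝ)
    (Z : Ω → Matrix (Fin K₁) (Fin K₂) ℝ) (Γ X : Ω → Matrix (Fin p) (Fin q) ℝ)
    (hA : IsMembership A) (hB : IsMembership B)
    (hmodel : ∀ ω, X ω = A * Z ω * Bᵀ + Γ ω)
    (hZmeas : Measurable Z) (hΓmeas : Measurable Γ)
    (hZmean : ∀ j k, ∫ ω, Z ω j k ∂μ = 0)
    (hΓmean : ∀ a b, ∫ ω, Γ ω a b ∂μ = 0)
    (hZint : ∀ j k j' k', Integrable (fun ω => Z ω j k * Z ω j' k') μ)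
    (hΓint : ∀ a b a' b', Integrable (fun ω => Γ ω a b * Γ ω a' b') μ)
    (hZΓint : ∀ j k a b, Integrable (fun ω => Z ω j k * Γ ω a b) μ)
    (hindep : IndepFun Z Γ μ)
    (W : Matrix (Fin q) (Fin q) ℝ) (hW : W.PosSemidef) :
    (∀ a b : Fin p, SameCluster A a b →
        COD (matExp μ fun ω => X ω * W * (X ω)ᵀ) a b ≤ gammaNoise μ Γ W) ∧
    (∀ a b : Fin p, a ≠ b → ¬ SameCluster A a b →
        MCOD (SameCluster A)
            (A * matExp μ (fun ω => Z ω * Bᵀ * W * B * (Z ω)ᵀ) * Aᵀ)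
          - gammaNoise μ Γ W
          ≤ COD (matExp μ fun ω => X ω * W * (X ω)ᵀ) a b) ∧
    (2 * gammaNoise μ Γ W <
        MCOD (SameCluster A)
          (A * matExp μ (fun ω => Z ω * Bᵀ * W * B * (Z ω)ᵀ) * Aᵀ) →
      ∀ a b a' b' : Fin p, SameCluster A a b → a' ≠ b' → ¬ SameCluster A a' b' →
        COD (matExp μ fun ω => X ω * W * (X ω)ᵀ) a b
          < COD (matExp μ fun ω => X ω * W * (X ω)ᵀ) a' b') := by
  -- abbreviations
  have hZm : ∀ j k, Measurable (fun ω => Z ω j k) := fun j k =>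
    (measurable_pi_apply k).comp ((measurable_pi_apply j).comp hZmeas)
  have hΓm : ∀ a b, Measurable (fun ω => Γ ω a b) := fun a b =>
    (measurable_pi_apply b).comp ((measurable_pi_apply a).comp hΓmeas)
  have hZ1 : ∀ j k, Integrable (fun ω => Z ω j k) μ := by
    intro j k
    refine ((hZint j k j k).add (integrable_const 1)).mono'
      ((hZm j k).aestronglyMeasurable) ?_
    filter_upwards with ω
    simp only [Real.norm_eq_abs, Pi.add_apply]
    nlinarith [sq_nonneg (|Z ω j k| - 1), sq_abs (Z ω j k)]
  have hΓ1 : ∀ a b, Integrable (fun ω => Γ ω a b) μ := by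
    intro a b
    refine ((hΓint a b a b).add (integrable_const 1)).mono'
      ((hΓm a b).aestronglyMeasurable) ?_
    filter_upwards with ω
    simp only [Real.norm_eq_abs, Pi.add_apply]
    nlinarith [sq_nonneg (|Γ ω a b| - 1), sq_abs (Γ ω a b)]
  have hZΓ0 : ∀ j k a b, ∫ ω, Z ω j k * Γ ω a b ∂μ = 0 := by
    intro j k a b
    have hind : IndepFun (fun ω => Z ω j k) (fun ω => Γ ω a b) μ :=
      hindep.comp
        ((measurable_pi_apply k).comp (measurable_pi_apply j))
        ((measurable_pi_apply b).comp (measurable_pi_apply a))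
    have h2 : ∫ ω, Z ω j k * Γ ω a b ∂μ
        = (∫ ω, Z ω j k ∂μ) * ∫ ω, Γ ω a b ∂μ :=
      hind.integral_fun_mul_eq_mul_integral (hZ1 j k).1 (hΓ1 a b).1
    rw [h2, hZmean, zero_mul]
  -- entry of A Z Bᵀ
  have hM1entry : ∀ ω (a : Fin p) (i : Fin q),
      (A * Z ω * Bᵀ) a i = ∑ k, ∑ l, A a k * B i l * Z ω k l :=
    fun ω a i => entry_sandwich A (Z ω) B a i
  -- integrability of products of entries of A Z Bᵀ
  have hM1prod : ∀ (a : Fin p) (i : Fin q) (a' : Fin p) (i' : Fin q),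
      Integrable (fun ω => (A * Z ω * Bᵀ) a i * (A * Z ω * Bᵀ) a' i') μ := by
    intro a i a' i'
    have hrep : (fun ω => (A * Z ω * Bᵀ) a i * (A * Z ω * Bᵀ) a' i')
        = fun ω => ∑ k, ∑ k', ∑ l, ∑ l',
            (A a k * B i l * (A a' k' * B i' l')) * (Z ω k l * Z ω k' l') := by
      funext ω
      rw [hM1entry, hM1entry, Finset.sum_mul_sum]
      refine Finset.sum_congr rfl fun k _ => ?_
      refine Finset.sum_congr rfl fun k' _ => ?_
      rw [Finset.sum_mul_sum]
      exact Finset.sum_congr rfl fun l _ => Finset.sum_congr rfl fun l' _ => by ring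
    rw [hrep]
    exact integrable_finset_sum _ fun k _ => integrable_finset_sum _ fun k' _ =>
      integrable_finset_sum _ fun l _ => integrable_finset_sum _ fun l' _ =>
        (hZint k l k' l').const_mul _
  -- cross terms: representation, integrability, zero integral
  have hMΓrep : ∀ (a : Fin p) (i : Fin q) (c : Fin p) (j : Fin q),
      (fun ω => (A * Z ω * Bᵀ) a i * Γ ω c j)
        = fun ω => ∑ k, ∑ l, (A a k * B i l) * (Z ω k l * Γ ω c j) := by
    intro a i c j
    funext ω
    rw [hM1entry, Finset.sum_mul]
    refine Finset.sum_congr rfl fun k _ => ?_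
    rw [Finset.sum_mul]
    exact Finset.sum_congr rfl fun l _ => by ring
  have hMΓint : ∀ (a : Fin p) (i : Fin q) (c : Fin p) (j : Fin q),
      Integrable (fun ω => (A * Z ω * Bᵀ) a i * Γ ω c j) μ := by
    intro a i c j
    rw [hMΓrep]
    exact integrable_finset_sum _ fun k _ => integrable_finset_sum _ fun l _ =>
      (hZΓint k l c j).const_mul _
  have hMΓ0 : ∀ (a : Fin p) (i : Fin q) (c : Fin p) (j : Fin q),
      ∫ ω, (A * Z ω * Bᵀ) a i * Γ ω c j ∂μ = 0 := by
    intro a i c j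
    rw [hMΓrep, integral_finset_sum _ fun k _ => integrable_finset_sum _ fun l _ =>
      (hZΓint k l c j).const_mul _]
    refine Finset.sum_eq_zero fun k _ => ?_
    rw [integral_finset_sum _ fun l _ => (hZΓint k l c j).const_mul _]
    refine Finset.sum_eq_zero fun l _ => ?_
    rw [MeasureTheory.integral_const_mul, hZΓ0, mul_zero]
  have hΓMint : ∀ (a : Fin p) (i : Fin q) (c : Fin p) (j : Fin q),
      Integrable (fun ω => Γ ω a i * (A * Z ω * Bᵀ) c j) μ := by
    intro a i c j
    have : (fun ω => Γ ω a i * (A * Z ω * Bᵀ) c j)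
        = fun ω => (A * Z ω * Bᵀ) c j * Γ ω a i := funext fun ω => mul_comm _ _
    rw [this]; exact hMΓint c j a i
  have hΓM0 : ∀ (a : Fin p) (i : Fin q) (c : Fin p) (j : Fin q),
      ∫ ω, Γ ω a i * (A * Z ω * Bᵀ) c j ∂μ = 0 := by
    intro a i c j
    have : (fun ω => Γ ω a i * (A * Z ω * Bᵀ) c j)
        = fun ω => (A * Z ω * Bᵀ) c j * Γ ω a i := funext fun ω => mul_comm _ _
    rw [this]; exact hMΓ0 c j a i
  -- integrability of entries of F = Z Bᵀ W B Zᵀ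
  have hFeq : ∀ ω, Z ω * Bᵀ * W * B * (Z ω)ᵀ
      = Z ω * (Bᵀ * W * B) * (Z ω)ᵀ := by
    intro ω; simp [Matrix.mul_assoc]
  have hFint : ∀ (k k' : Fin K₁),
      Integrable (fun ω => (Z ω * Bᵀ * W * B * (Z ω)ᵀ) k k') μ := by
    intro k k'
    simp only [hFeq]
    exact (integral_quadform μ Z Z (Bᵀ * W * B) k k' (fun i j => hZint k i k' j)).1
  -- key decomposition
  have key : ∀ a c : Fin p,
      (matExp μ fun ω => X ω * W * (X ω)ᵀ) a c
        = (A * matExp μ (fun ω => Z ω * Bᵀ * W * B * (Z ω)ᵀ) * Aᵀ) a c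
          + matExp μ (fun ω => Γ ω * W * (Γ ω)ᵀ) a c := by
    intro a c
    have i1 := (integral_quadform μ (fun ω => A * Z ω * Bᵀ) (fun ω => A * Z ω * Bᵀ)
      W a c (fun i j => hM1prod a i c j)).1
    have i2 := integral_quadform μ (fun ω => A * Z ω * Bᵀ) Γ W a c
      (fun i j => hMΓint a i c j)
    have i3 := integral_quadform μ Γ (fun ω => A * Z ω * Bᵀ) W a c
      (fun i j => hΓMint a i c j)
    have i4 := (integral_quadform μ Γ Γ W a c (fun i j => hΓint a i c j)).1
    have hsplit : (fun ω => (X ω * W * (X ω)ᵀ) a c)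
        = fun ω => ((A * Z ω * Bᵀ) * W * (A * Z ω * Bᵀ)ᵀ) a c
            + ((A * Z ω * Bᵀ) * W * (Γ ω)ᵀ) a c
            + (Γ ω * W * (A * Z ω * Bᵀ)ᵀ) a c
            + (Γ ω * W * (Γ ω)ᵀ) a c := by
      funext ω
      rw [hmodel ω]
      simp only [Matrix.add_mul, Matrix.mul_add, Matrix.transpose_add, Matrix.add_apply]
      ring
    have hmain : (matExp μ fun ω => X ω * W * (X ω)ᵀ) a c
        = ∫ ω, (((A * Z ω * Bᵀ) * W * (A * Z ω * Bᵀ)ᵀ) a c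
            + ((A * Z ω * Bᵀ) * W * (Γ ω)ᵀ) a c
            + (Γ ω * W * (A * Z ω * Bᵀ)ᵀ) a c
            + (Γ ω * W * (Γ ω)ᵀ) a c) ∂μ := by
      show (∫ ω, (X ω * W * (X ω)ᵀ) a c ∂μ) = _
      exact congrArg (fun f => ∫ ω, f ω ∂μ) hsplit
    have I12 : Integrable (fun ω => (A * Z ω * Bᵀ * W * (A * Z ω * Bᵀ)ᵀ) a c
        + (A * Z ω * Bᵀ * W * (Γ ω)ᵀ) a c) μ := i1.add i2.1
    have I123 : Integrable (fun ω => (A * Z ω * Bᵀ * W * (A * Z ω * Bᵀ)ᵀ) a c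
        + (A * Z ω * Bᵀ * W * (Γ ω)ᵀ) a c
        + (Γ ω * W * (A * Z ω * Bᵀ)ᵀ) a c) μ := I12.add i3.1
    rw [hmain, integral_add I123 i4, integral_add I12 i3.1, integral_add i1 i2.1]
    -- cross terms vanish
    have p2 : ∫ ω, ((A * Z ω * Bᵀ) * W * (Γ ω)ᵀ) a c ∂μ = 0 := by
      rw [i2.2]
      exact Finset.sum_eq_zero fun i _ => Finset.sum_eq_zero fun j _ => by
        rw [hMΓ0, mul_zero]
    have p3 : ∫ ω, (Γ ω * W * (A * Z ω * Bᵀ)ᵀ) a c ∂μ = 0 := by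
      rw [i3.2]
      exact Finset.sum_eq_zero fun i _ => Finset.sum_eq_zero fun j _ => by
        rw [hΓM0, mul_zero]
    have p1 : ∫ ω, ((A * Z ω * Bᵀ) * W * (A * Z ω * Bᵀ)ᵀ) a c ∂μ
        = (A * matExp μ (fun ω => Z ω * Bᵀ * W * B * (Z ω)ᵀ) * Aᵀ) a c := by
      have hMM : ∀ ω, (A * Z ω * Bᵀ) * W * (A * Z ω * Bᵀ)ᵀ
          = A * (Z ω * Bᵀ * W * B * (Z ω)ᵀ) * Aᵀ := by
        intro ω
        simp [Matrix.transpose_mul, Matrix.mul_assoc]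
      have h1 : (fun ω => ((A * Z ω * Bᵀ) * W * (A * Z ω * Bᵀ)ᵀ) a c)
          = fun ω => ∑ k, ∑ k', A a k * A c k' * (Z ω * Bᵀ * W * B * (Z ω)ᵀ) k k' := by
        funext ω
        rw [hMM ω, entry_sandwich]
      rw [show (∫ ω, ((A * Z ω * Bᵀ) * W * (A * Z ω * Bᵀ)ᵀ) a c ∂μ)
          = ∫ ω, ∑ k, ∑ k', A a k * A c k' * (Z ω * Bᵀ * W * B * (Z ω)ᵀ) k k' ∂μ
          from congrArg (fun f => ∫ ω, f ω ∂μ) h1]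
      rw [integral_finset_sum _ fun k _ => integrable_finset_sum _ fun k' _ =>
        (hFint k k').const_mul _]
      rw [entry_sandwich]
      refine Finset.sum_congr rfl fun k _ => ?_
      rw [integral_finset_sum _ fun k' _ => (hFint k k').const_mul _]
      exact Finset.sum_congr rfl fun k' _ => MeasureTheory.integral_const_mul _ _
    have p4 : ∫ ω, (Γ ω * W * (Γ ω)ᵀ) a c ∂μ
        = matExp μ (fun ω => Γ ω * W * (Γ ω)ᵀ) a c := rfl
    rw [p1, p2, p3, p4]
    ring
  -- rows of A are equal within a cluster
  have hrow : ∀ a b : Fin p, SameCluster A a b → ∀ k, A a k = A b k := by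
    rintro a b ⟨k0, ha1, hb1⟩ k
    obtain ⟨h01, huniq, -⟩ := hA
    by_cases hk : k = k0
    · rw [hk, ha1, hb1]
    · have hza : A a k = 0 := by
        rcases h01 a k with h | h
        · exact h
        · obtain ⟨k₁, -, hu⟩ := huniq a
          exact absurd ((hu k h).trans (hu k0 ha1).symm) hk
      have hzb : A b k = 0 := by
        rcases h01 b k with h | h
        · exact h
        · obtain ⟨k₁, -, hu⟩ := huniq b
          exact absurd ((hu k h).trans (hu k0 hb1).symm) hk
      rw [hza, hzb]
  have hSrow : ∀ a b : Fin p, SameCluster A a b → ∀ c : Fin p,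
      (A * matExp μ (fun ω => Z ω * Bᵀ * W * B * (Z ω)ᵀ) * Aᵀ) a c
        = (A * matExp μ (fun ω => Z ω * Bᵀ * W * B * (Z ω)ᵀ) * Aᵀ) b c := by
    intro a b hab c
    rw [entry_sandwich, entry_sandwich]
    exact Finset.sum_congr rfl fun k _ => Finset.sum_congr rfl fun k' _ => by
      rw [hrow a b hab k]
  -- part 1
  have part1 : ∀ a b : Fin p, SameCluster A a b →
      COD (matExp μ fun ω => X ω * W * (X ω)ᵀ) a b ≤ gammaNoise μ Γ W := by
    intro a b hab
    refine COD_le_aux _ a b _ (gamma_nonneg μ hp Γ W) fun c hca hcb => ?_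
    have hd : (matExp μ fun ω => X ω * W * (X ω)ᵀ) a c
        - (matExp μ fun ω => X ω * W * (X ω)ᵀ) b c
        = matExp μ (fun ω => Γ ω * W * (Γ ω)ᵀ) a c
          - matExp μ (fun ω => Γ ω * W * (Γ ω)ᵀ) b c := by
      rw [key a c, key b c, hSrow a b hab c]; ring
    rw [hd]
    exact le_gamma_aux μ Γ W a b c hca hcb
  -- part 2
  have part2 : ∀ a b : Fin p, a ≠ b → ¬ SameCluster A a b →
      MCOD (SameCluster A)
          (A * matExp μ (fun ω => Z ω * Bᵀ * W * B * (Z ω)ᵀ) * Aᵀ)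
        - gammaNoise μ Γ W
        ≤ COD (matExp μ fun ω => X ω * W * (X ω)ᵀ) a b := by
    intro a b hne hnot
    have h1 : MCOD (SameCluster A)
        (A * matExp μ (fun ω => Z ω * Bᵀ * W * B * (Z ω)ᵀ) * Aᵀ)
        ≤ COD (A * matExp μ (fun ω => Z ω * Bᵀ * W * B * (Z ω)ᵀ) * Aᵀ) a b :=
      MCOD_le_aux _ _ a b hnot
    have h2 : COD (A * matExp μ (fun ω => Z ω * Bᵀ * W * B * (Z ω)ᵀ) * Aᵀ) a b
        ≤ COD (matExp μ fun ω => X ω * W * (X ω)ᵀ) a b + gammaNoise μ Γ W := by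
      refine COD_le_aux _ a b _
        (add_nonneg (COD_nonneg hp _ a b) (gamma_nonneg μ hp Γ W)) fun c hca hcb => ?_
      have hd : (A * matExp μ (fun ω => Z ω * Bᵀ * W * B * (Z ω)ᵀ) * Aᵀ) a c
          - (A * matExp μ (fun ω => Z ω * Bᵀ * W * B * (Z ω)ᵀ) * Aᵀ) b c
          = ((matExp μ fun ω => X ω * W * (X ω)ᵀ) a c
              - (matExp μ fun ω => X ω * W * (X ω)ᵀ) b c)
            - (matExp μ (fun ω => Γ ω * W * (Γ ω)ᵀ) a c
              - matExp μ (fun ω => Γ ω * W * (Γ ω)ᵀ) b c) := by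
        rw [key a c, key b c]; ring
      calc |(A * matExp μ (fun ω => Z ω * Bᵀ * W * B * (Z ω)ᵀ) * Aᵀ) a c
          - (A * matExp μ (fun ω => Z ω * Bᵀ * W * B * (Z ω)ᵀ) * Aᵀ) b c|
          ≤ |(matExp μ fun ω => X ω * W * (X ω)ᵀ) a c
              - (matExp μ fun ω => X ω * W * (X ω)ᵀ) b c|
            + |matExp μ (fun ω => Γ ω * W * (Γ ω)ᵀ) a c
              - matExp μ (fun ω => Γ ω * W * (Γ ω)ᵀ) b c| := by
            rw [hd]; exact abs_sub _ _
        _ ≤ COD (matExp μ fun ω => X ω * W * (X ω)ᵀ) a b + gammaNoise μ Γ W :=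
            add_le_add (le_COD_aux _ a b c hca hcb) (le_gamma_aux μ Γ W a b c hca hcb)
    linarith
  refine ⟨part1, part2, fun hlt a b a' b' hab hne' hnot' => ?_⟩
  have h1 := part1 a b hab
  have h2 := part2 a' b' hne' hnot'
  linarith
end
end
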